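/- Let φ(x,t) = t^p + a(x) t^q with 1 < p < q < ∞ and a a nonnegative function in C^{0,α}(ℝⁿ) for some α ∈ (0,1]. Then for every compact subset E of an open set O ⊆ ℝⁿ, the infimal φ-capacity is bounded above by the variational p-capacity: cap_φ^inf(E;O) ≤ cap_p(E;O). -/

import Mathlib

open MeasureTheory Metric Set

noncomputable section

/-- Euclidean space `ℝⁿ`. -/
abbrev En (n : ℕ) : Type := EuclideanSpace ℝ (Fin n)

/-- Norm of the (a.e. defined, by Rademacher's theorem) gradient of `u` at `x`. -/
def gnorm {n : ℕ} (u : En n → ℝ) (x : En n) : ℝ := ‖fderiv ℝ u x‖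

/-- Admissible test functions for the level-`t` capacity of `E` in `O`:
Lipschitz on the closure of `O`, `u ≥ t` on `E`, `u = 0` on `∂O`. -/
def Adm {n : ℕ} (E O : Set (En n)) (t : ℝ) : Set (En n → ℝ) :=
  {u | (∃ K, LipschitzOnWith K u (closure O)) ∧ (∀ x ∈ E, t ≤ u x) ∧
    ∀ x ∈ frontier O, u x = 0}

/-- Level-`t` variational capacity with integrand `ψ` and normalization `ψm`. -/
def capLevel {n : ℕ} (ψ : En n → ℝ → ℝ) (ψm : ℝ → ℝ)
    (E O : Set (En n)) (t : ℝ) : ℝ :=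
  sInf ((fun u => ∫ x in O, ψ x (gnorm u x) / ψm t) '' Adm E O t)

/-- Infimal capacity with integrand `ψ` and normalization `ψm`. -/
def capInfGen {n : ℕ} (ψ : En n → ℝ → ℝ) (ψm : ℝ → ℝ) (E O : Set (En n)) : ℝ :=
  ⨅ t : Ioi (0 : ℝ), capLevel ψ ψm E O (t : ℝ)

/-- The double-phase integrand `φ(x,t) = t^p + a(x) t^q`. -/
def phi {n : ℕ} (a : En n → ℝ) (p q : ℝ) (x : En n) (t : ℝ) : ℝ :=
  t ^ p + a x * t ^ q

/-- `a_O^- = inf_{x ∈ O} a(x)`. -/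
def aInfOn {n : ℕ} (a : En n → ℝ) (O : Set (En n)) : ℝ := sInf (a '' O)

/-- `a_O^+ = sup_{x ∈ O} a(x)`. -/
def aSupOn {n : ℕ} (a : En n → ℝ) (O : Set (En n)) : ℝ := sSup (a '' O)

/-- `φ_O^-(t) = t^p + a_O^- t^q`. -/
def phiMinus {n : ℕ} (a : En n → ℝ) (p q : ℝ) (O : Set (En n)) (t : ℝ) : ℝ :=
  t ^ p + aInfOn a O * t ^ q

/-- Level-`t` variational capacity for the double-phase integrand. -/
def capPhiLevel {n : ℕ} (a : En n → ℝ) (p q t : ℝ) (E O : Set (En n)) : ℝ :=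
  capLevel (phi a p q) (phiMinus a p q O) E O t

/-- Infimal `φ`-capacity. -/
def capPhiInf {n : ℕ} (a : En n → ℝ) (p q : ℝ) (E O : Set (En n)) : ℝ :=
  ⨅ t : Ioi (0 : ℝ), capPhiLevel a p q (t : ℝ) E O

/-- Variational `p`-capacity. -/
def capP {n : ℕ} (p : ℝ) (E O : Set (En n)) : ℝ :=
  sInf ((fun u => ∫ x in O, gnorm u x ^ p) '' Adm E O 1)

/-- The rescaled set `{x ∈ B̄(0,1/2) : z + r x ∈ E}`. -/
def shiftedSet {n : ℕ} (E : Set (En n)) (z : En n) (r : ℝ) : Set (En n) :=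
  {x ∈ closedBall (0 : En n) (1 / 2) | z + r • x ∈ E}

/-- Local uniform infimal `φ`-fatness with parameters `cfat` and `ro`. -/
def LocUnifPhiFat {n : ℕ} (a : En n → ℝ) (p q : ℝ) (E : Set (En n))
    (cfat ro : ℝ) : Prop :=
  ∀ z ∈ E, ∀ r : ℝ, 0 < r → r < ro →
    cfat ≤ capPhiInf (fun x => a (z + r • x)) p q (shiftedSet E z r) (ball (0 : En n) 1)

/-- Local uniform `p`-fatness with parameters `cfat` and `ro`. -/
def LocUnifPFat {n : ℕ} (p : ℝ) (E : Set (En n)) (cfat ro : ℝ) : Prop :=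
  ∀ z ∈ E, ∀ r : ℝ, 0 < r → r < ro →
    cfat ≤ capP p (shiftedSet E z r) (ball (0 : En n) 1)

/-- `Lip_0(Ω)`: Lipschitz functions with compact support contained in `Ω`,
extended by zero to `ℝⁿ`. -/
def Lip0 {n : ℕ} (Ω : Set (En n)) : Set (En n → ℝ) :=
  {u | (∃ K, LipschitzWith K u) ∧ HasCompactSupport u ∧ tsupport u ⊆ Ω}

/-- Restricted centered maximal operator `M_R f(x) = sup_{0<r<R} ⨍_{B(x,r)} |f|`. -/
def maxOp {n : ℕ} (R : ℝ) (f : En n → ℝ) (x : En n) : ℝ :=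
  ⨆ r : Ioo (0 : ℝ) R, ⨍ y in ball x (r : ℝ), |f y|


/-!
If `u` is admissible for `cap_p(E;O)`, then `t u` is admissible at level `t`, and since
`φ_O^-(t) ≥ t^p`, its normalized energy is at most `∫_O |∇u|^p + t^(q-p) ∫_O a |∇u|^q`.
As `q > p`, letting `t → 0⁺` leaves `∫_O |∇u|^p`.
-/

open Filter Topology

section Capacity

variable {n : ℕ} {E O : Set (En n)}

theorem const_mul_mem_Adm {u : En n → ℝ} {s t : ℝ} (ht : 0 ≤ t) (hu : u ∈ Adm E O s) :
    (fun x => t * u x) ∈ Adm E O (t * s) := by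
  obtain ⟨⟨K, hK⟩, hE, hO⟩ := hu
  exact ⟨⟨_, (lipschitzWith_smul t).comp_lipschitzOnWith hK⟩,
    fun x hx => mul_le_mul_of_nonneg_left (hE x hx) ht, fun x hx => by simp [hO x hx]⟩

theorem gnorm_const_mul (u : En n → ℝ) (t : ℝ) (x : En n) :
    gnorm (fun y => t * u y) x = |t| * gnorm u x := by
  rw [gnorm, gnorm, show (fun y => t * u y) = t • u from rfl, fderiv_const_smul_field,
    Pi.smul_apply, norm_smul, Real.norm_eq_abs]

variable {ψ : En n → ℝ → ℝ} {ψm : ℝ → ℝ} {t : ℝ}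

theorem zero_mem_lowerBounds_capIntegrals (hψ : ∀ x s, 0 ≤ s → 0 ≤ ψ x s) (hψm : 0 ≤ ψm t) :
    0 ∈ lowerBounds ((fun u => ∫ x in O, ψ x (gnorm u x) / ψm t) '' Adm E O t) := by
  rintro _ ⟨u, -, rfl⟩
  exact integral_nonneg fun x => div_nonneg (hψ x _ (norm_nonneg _)) hψm

theorem capLevel_nonneg (hψ : ∀ x s, 0 ≤ s → 0 ≤ ψ x s) (hψm : 0 ≤ ψm t) :
    0 ≤ capLevel ψ ψm E O t :=
  Real.sInf_nonneg (zero_mem_lowerBounds_capIntegrals hψ hψm)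

theorem capLevel_le_integral (hψ : ∀ x s, 0 ≤ s → 0 ≤ ψ x s) (hψm : 0 ≤ ψm t)
    {u : En n → ℝ} (hu : u ∈ Adm E O t) :
    capLevel ψ ψm E O t ≤ ∫ x in O, ψ x (gnorm u x) / ψm t :=
  csInf_le ⟨0, zero_mem_lowerBounds_capIntegrals hψ hψm⟩ ⟨u, hu, rfl⟩

theorem capInfGen_le_capLevel (hψ : ∀ x s, 0 ≤ s → 0 ≤ ψ x s) (hψm : ∀ s, 0 < s → 0 ≤ ψm s)
    (ht : 0 < t) : capInfGen ψ ψm E O ≤ capLevel ψ ψm E O t := by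
  refine ciInf_le ⟨0, ?_⟩ (⟨t, ht⟩ : Ioi (0 : ℝ))
  rintro _ ⟨⟨s, hs⟩, rfl⟩
  exact capLevel_nonneg hψ (hψm s hs)

theorem capLevel_eq_zero_of_Adm_eq_empty (h : Adm E O t = ∅) : capLevel ψ ψm E O t = 0 := by
  simp [capLevel, h]

theorem capP_eq_zero_of_Adm_eq_empty {p : ℝ} (h : Adm E O 1 = ∅) : capP p E O = 0 := by
  simp [capP, h]

end Capacity

theorem add_rpow_mul_div_le {p q m t P C : ℝ} (hm : 0 ≤ m) (ht : 0 < t) (hP : 0 ≤ P)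
    (hC : 0 ≤ C) : (t ^ p * P + t ^ q * C) / (t ^ p + m * t ^ q) ≤ P + t ^ (q - p) * C := by
  have htp : 0 < t ^ p := Real.rpow_pos_of_pos ht p
  have htq : 0 < t ^ q := Real.rpow_pos_of_pos ht q
  have htqp : 0 < t ^ (q - p) := Real.rpow_pos_of_pos ht _
  have hmul : t ^ (q - p) * t ^ p = t ^ q := by rw [← Real.rpow_add ht, sub_add_cancel]
  rw [div_le_iff₀ (by positivity)]
  nlinarith [mul_nonneg (mul_nonneg hm htq.le) hP,
    mul_nonneg (mul_nonneg hm htq.le) (mul_nonneg htqp.le hC)]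

theorem le_of_forall_pos_le_add_rpow_mul {c P C r : ℝ} (hr : 0 < r)
    (h : ∀ t, 0 < t → c ≤ P + t ^ r * C) : c ≤ P := by
  have hlim : Tendsto (fun t : ℝ => P + t ^ r * C) (𝓝[>] (0 : ℝ)) (𝓝 P) := by
    have hpow := ((Real.continuous_rpow_const hr.le).tendsto 0).mono_left
      (nhdsWithin_le_nhds (s := Ioi 0))
    simpa [Real.zero_rpow hr.ne'] using tendsto_const_nhds.add (hpow.mul_const C)
  exact ge_of_tendsto hlim (eventually_nhdsWithin_of_forall h)

section DoublePhase

variable {n : ℕ} {a : En n → ℝ} {p q : ℝ} {E O : Set (En n)}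

theorem aInfOn_nonneg (ha : ∀ x, 0 ≤ a x) : 0 ≤ aInfOn a O :=
  Real.sInf_nonneg (by rintro _ ⟨x, -, rfl⟩; exact ha x)

theorem phi_nonneg (ha : ∀ x, 0 ≤ a x) (x : En n) {s : ℝ} (hs : 0 ≤ s) : 0 ≤ phi a p q x s := by
  have := ha x
  unfold phi
  positivity

theorem phiMinus_pos (ha : ∀ x, 0 ≤ a x) {t : ℝ} (ht : 0 < t) : 0 < phiMinus a p q O t := by
  have := aInfOn_nonneg ha (O := O)
  unfold phiMinus
  positivity

theorem phi_mul (x : En n) {s t : ℝ} (ht : 0 ≤ t) (hs : 0 ≤ s) :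
    phi a p q x (t * s) = t ^ p * s ^ p + t ^ q * (a x * s ^ q) := by
  rw [phi, Real.mul_rpow ht hs, Real.mul_rpow ht hs]
  ring

theorem capPhiInf_le_capPhiLevel (ha : ∀ x, 0 ≤ a x) {t : ℝ} (ht : 0 < t) :
    capPhiInf a p q E O ≤ capPhiLevel a p q t E O :=
  capInfGen_le_capLevel (fun x _ hs => phi_nonneg ha x hs) (fun _ hs => (phiMinus_pos ha hs).le) ht

theorem integrable_rpow_and_mul_rpow_of_integrable_phi {μ : Measure (En n)} {g : En n → ℝ}
    (hg : AEMeasurable g μ) (hg0 : ∀ x, 0 ≤ g x) (ha : ∀ x, 0 ≤ a x)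
    (h : Integrable (fun x => phi a p q x (g x)) μ) :
    Integrable (fun x => g x ^ p) μ ∧ Integrable (fun x => a x * g x ^ q) μ := by
  have hp : Integrable (fun x => g x ^ p) μ := by
    refine h.mono' (hg.pow_const p).aestronglyMeasurable (ae_of_all _ fun x => ?_)
    have := mul_nonneg (ha x) (Real.rpow_nonneg (hg0 x) q)
    rw [Real.norm_of_nonneg (Real.rpow_nonneg (hg0 x) p), phi]
    linarith
  exact ⟨hp, (h.sub hp).congr (ae_of_all _ fun x => by simp [phi])⟩

theorem capPhiInf_le_integral_gnorm_rpow (ha : ∀ x, 0 ≤ a x) (hpq : p < q) {u : En n → ℝ}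
    (hu : u ∈ Adm E O 1) : capPhiInf a p q E O ≤ ∫ x in O, gnorm u x ^ p := by
  set g := gnorm u
  have hg : Measurable g := (measurable_fderiv ℝ u).norm
  have hg0 : ∀ x, 0 ≤ g x := fun x => norm_nonneg _
  have hlevel : ∀ t, 0 < t →
      capPhiInf a p q E O ≤ ∫ x in O, phi a p q x (t * g x) / phiMinus a p q O t := by
    intro t ht
    have htu : (fun x => t * u x) ∈ Adm E O t := by simpa using const_mul_mem_Adm ht.le hu
    calc capPhiInf a p q E O ≤ capPhiLevel a p q t E O := capPhiInf_le_capPhiLevel ha ht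
      _ ≤ _ := capLevel_le_integral (fun x _ hs => phi_nonneg ha x hs) (phiMinus_pos ha ht).le htu
      _ = _ := by simp_rw [gnorm_const_mul, abs_of_pos ht]; rfl
  by_cases hint : Integrable (fun x => phi a p q x (g x)) (volume.restrict O)
  · obtain ⟨hgp, hgq⟩ := integrable_rpow_and_mul_rpow_of_integrable_phi
      hg.aemeasurable hg0 ha hint
    refine le_of_forall_pos_le_add_rpow_mul (C := ∫ x in O, a x * g x ^ q) (sub_pos.2 hpq)
      fun t ht => ?_
    calc capPhiInf a p q E O ≤ _ := hlevel t ht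
      _ = (t ^ p * (∫ x in O, g x ^ p) + t ^ q * ∫ x in O, a x * g x ^ q) /
            phiMinus a p q O t := by
        simp_rw [phi_mul _ ht.le (hg0 _)]
        rw [integral_div, integral_add (hgp.const_mul _) (hgq.const_mul _), integral_const_mul,
          integral_const_mul]
      _ ≤ _ := by
        rw [phiMinus]
        exact add_rpow_mul_div_le (aInfOn_nonneg ha) ht
          (integral_nonneg fun x => Real.rpow_nonneg (hg0 x) p)
          (integral_nonneg fun x => mul_nonneg (ha x) (Real.rpow_nonneg (hg0 x) q))
  · -- the level-1 energy diverges, so its Bochner integral is the junk value `0`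
    calc capPhiInf a p q E O ≤ _ := hlevel 1 one_pos
      _ = 0 := by simp_rw [one_mul]; rw [integral_div, integral_undef hint, zero_div]
      _ ≤ _ := integral_nonneg fun x => Real.rpow_nonneg (hg0 x) p

end DoublePhase

theorem capPhiInf_le_capP_general
    (n : ℕ) (p q : ℝ) (a : En n → ℝ)
    (hpq : p < q)
    (ha : ∀ x, 0 ≤ a x)
    (E O : Set (En n)) :
    capPhiInf a p q E O ≤ capP p E O := by
  rcases (Adm E O 1).eq_empty_or_nonempty with hadm | hadm
  · calc capPhiInf a p q E O ≤ capPhiLevel a p q 1 E O := capPhiInf_le_capPhiLevel ha one_pos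
      _ = capP p E O := by
        rw [capPhiLevel, capLevel_eq_zero_of_Adm_eq_empty hadm, capP_eq_zero_of_Adm_eq_empty hadm]
  · exact le_csInf (hadm.image _) fun _ ⟨u, hu, hval⟩ =>
      hval ▸ capPhiInf_le_integral_gnorm_rpow ha hpq hu

/-- **Upper bound for the infimal capacity** (Lemma 2.2):
`cap_φ^inf(E;O) ≤ cap_p(E;O)`. -/
theorem capPhiInf_le_capP
    (n : ℕ) (p q α A : ℝ) (a : En n → ℝ)
    (hp : 1 < p) (hpq : p < q) (hα : 0 < α) (hα1 : α ≤ 1)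
    (ha : ∀ x, 0 ≤ a x) (hA : 0 ≤ A)
    (haH : ∀ x y, |a x - a y| ≤ A * dist x y ^ α)
    (E O : Set (En n)) (hE : IsCompact E) (hEO : E ⊆ O) (hO : IsOpen O) :
    capPhiInf a p q E O ≤ capP p E O :=
  capPhiInf_le_capP_general n p q a hpq ha E O
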